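/- arXiv:1710.05651 — 10 statements merged into one kernel-verified Lean document; each statement's English description precedes it below -/
import Mathlib

section
/- If a full binary tree with n+1 leaves has exactly r leaves of even depth, then n + r ≡ 1 (mod 3). -/
/-- A full binary tree: each node is a leaf or has exactly two ordered children. -/
inductive BTree where
  | leaf : BTree
  | node : BTree → BTree → BTree

/-- The depth sequence of a full binary tree: the depths of its leaves in
left-to-right (preorder) order. -/
def BTree.depths : BTree → List ℕ
  | .leaf => [0]
  | .node l r => (BTree.depths l ++ BTree.depths r).map (· + 1)

/-- The number of leaves of a full binary tree. -/
def BTree.numLeaves (t : BTree) : ℕ := t.depths.length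

/-!
Weight a leaf of depth `d` by `(-1) ^ d`. In `ZMod 3` the total weight of every full binary tree
is `1`: a leaf weighs `1`, and passing to the children of a node negates both subtrees' weights,
giving `-(1 + 1) = 1`. The total weight is also `r - (n + 1 - r) = 2r - n - 1`, so `n + r ≡ 1`.
-/

theorem List.sum_map_neg_one_pow {R : Type*} [CommRing R] (l : List ℕ) :
    (l.map ((-1 : R) ^ ·)).sum = 2 * (l.filter (· % 2 = 0)).length - l.length := by
  induction l with
  | nil => simp
  | cons d l ih =>
    rcases Nat.mod_two_eq_zero_or_one d with h | h
    · simp only [List.map_cons, List.sum_cons, ih, List.filter_cons, h, decide_true,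
        if_true, List.length_cons, (Nat.even_iff.2 h).neg_one_pow]
      push_cast; ring
    · simp only [List.map_cons, List.sum_cons, ih, List.filter_cons, h, one_ne_zero, decide_false,
        Bool.false_eq_true, if_false, List.length_cons, (Nat.odd_iff.2 h).neg_one_pow]
      push_cast; ring

theorem BTree.sum_neg_one_pow_depths (t : BTree) :
    (t.depths.map ((-1 : ZMod 3) ^ ·)).sum = 1 := by
  induction t with
  | leaf => simp [BTree.depths]
  | node l r ihl ihr =>
    simp only [BTree.depths, List.map_map, Function.comp_def, pow_succ, List.map_append,
      List.sum_append, List.sum_map_mul_right, ihl, ihr]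
    decide

theorem stmt5 (n r : ℕ) (t : BTree) (hleaves : t.numLeaves = n + 1)
    (hr : (t.depths.filter (fun d => d % 2 = 0)).length = r) :
    (n + r) % 3 = 1 := by
  have hweight := t.depths.sum_map_neg_one_pow (R := ZMod 3)
  rw [t.sum_neg_one_pow_depths, hr, ← BTree.numLeaves, hleaves] at hweight
  have h3 : (3 : ZMod 3) = 0 := rfl
  have hmod : ((n + r : ℕ) : ZMod 3) = (1 : ℕ) := by
    push_cast at hweight ⊢
    linear_combination -2 * hweight + (n - r + 1 : ZMod 3) * h3
  exact (ZMod.natCast_eq_natCast_iff' _ _ _).1 hmod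
end

section
/- For every full binary tree t with n+1 leaves where n ≥ 1, there exists an index j with 0 ≤ j ≤ n-1 such that leaves j and j+1 (in left-to-right order) have equal depth. -/
namespace List

theorem exists_getD_eq_getD_succ_of_pair_infix {α : Type*} {L : List α} {a d : α}
    (h : [a, a] <:+: L) : ∃ j, j + 1 < L.length ∧ L.getD j d = L.getD (j + 1) d := by
  obtain ⟨s, t, rfl⟩ := h
  exact ⟨s.length, by simp, by simp [getD_eq_getElem?_getD]⟩

end List

namespace BTree

theorem exists_pair_infix_depths {t : BTree} (ht : t ≠ leaf) : ∃ a, [a, a] <:+: t.depths := by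
  induction t with
  | leaf => exact absurd rfl ht
  | node l r ihl ihr =>
    by_cases hl : l = leaf
    · by_cases hr : r = leaf
      · subst hl hr
        exact ⟨1, List.infix_refl _⟩
      · obtain ⟨a, h⟩ := ihr hr
        exact ⟨a + 1, (h.trans (List.suffix_append _ _).isInfix).map (· + 1)⟩
    · obtain ⟨a, h⟩ := ihl hl
      exact ⟨a + 1, (h.trans (List.prefix_append _ _).isInfix).map (· + 1)⟩

end BTree

theorem stmt6 (n : ℕ) (hn : 1 ≤ n) (t : BTree) (hleaves : t.numLeaves = n + 1) :
    ∃ j, j + 1 ≤ n ∧ t.depths.getD j 0 = t.depths.getD (j + 1) 0 := by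
  have ht : t ≠ .leaf := by
    rintro rfl
    simp only [BTree.numLeaves, BTree.depths, List.length_singleton] at hleaves
    omega
  obtain ⟨a, hpair⟩ := BTree.exists_pair_infix_depths ht
  obtain ⟨j, hj, heq⟩ := List.exists_getD_eq_getD_succ_of_pair_infix (d := 0) hpair
  exact ⟨j, by rw [BTree.numLeaves] at hleaves; omega, heq⟩
end

section
/- In a full binary tree with at least two leaves, a leftmost leaf of maximal depth has a sibling which is also a leaf, namely the next leaf to its right, and these two leaves have equal depth. -/
/-!
Let `j` be the leftmost leaf of maximal depth, and induct on the tree `node l r`, after removing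
the common `+ 1` from all depths. The index `j` is then the leftmost maximum of the depths of `l`
or of `r`, and the claim passes up from that child unless the child is a single leaf. A leaf as
left child has depth `0 = max`, so its right neighbour has depth `0` as well; a leaf as right
child would be the maximum, at depth `0`, with the first leaf of `l` strictly shallower.
-/

namespace List

variable {α : Type*}

theorem lt_length_of_getElem?_eq {L : List α} {i j : ℕ} (h : L[i]? = L[j]?) (hj : j < L.length) :
    i < L.length := by
  by_contra hi
  simp [getElem?_eq_none (Nat.le_of_not_lt hi), hj] at h

variable [LinearOrder α]

structure IsLeftmostMax (L : List α) (j : ℕ) : Prop where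
  lt_length : j < L.length
  le : ∀ i (hi : i < L.length), L[i] ≤ L[j]
  lt : ∀ i (hi : i < j), L[i]'(hi.trans lt_length) < L[j]

variable {L L₁ L₂ : List α} {j : ℕ}

theorem IsLeftmostMax.of_map {β : Type*} [LinearOrder β] {f : α → β} (hf : StrictMono f)
    (h : (L.map f).IsLeftmostMax j) : L.IsLeftmostMax j where
  lt_length := by simpa using h.lt_length
  le i hi := hf.le_iff_le.mp <| by
    have := h.le i (by simpa using hi)
    rwa [getElem_map, getElem_map] at this
  lt i hi := hf.lt_iff_lt.mp <| by
    have := h.lt i hi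
    rwa [getElem_map, getElem_map] at this

theorem IsLeftmostMax.of_append_left (h : (L₁ ++ L₂).IsLeftmostMax j) (hj : j < L₁.length) :
    L₁.IsLeftmostMax j where
  lt_length := hj
  le i hi := by
    have := h.le i (by simp; omega)
    rwa [getElem_append_left hi, getElem_append_left hj] at this
  lt i hi := by
    have := h.lt i hi
    rwa [getElem_append_left, getElem_append_left hj] at this

theorem IsLeftmostMax.of_append_right (h : (L₁ ++ L₂).IsLeftmostMax j)
    (hj : L₁.length ≤ j) : L₂.IsLeftmostMax (j - L₁.length) where
  lt_length := by have := h.lt_length; simp only [length_append] at this; omega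
  le i hi := by
    have := h.le (L₁.length + i) (by simp; omega)
    rw [getElem_append_right (by omega), getElem_append_right hj] at this
    simpa only [Nat.add_sub_cancel_left] using this
  lt i hi := by
    have := h.lt (L₁.length + i) (by omega)
    rw [getElem_append_right (by omega), getElem_append_right hj] at this
    simpa only [Nat.add_sub_cancel_left] using this

theorem IsLeftmostMax.of_getD (d : α) (hj : j < L.length)
    (hle : ∀ i < L.length, L.getD i d ≤ L.getD j d) (hlt : ∀ i < j, L.getD i d < L.getD j d) :
    L.IsLeftmostMax j where
  lt_length := hj
  le i hi := by simpa [getD_eq_getElem, hi, hj] using hle i hi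
  lt i hi := by simpa [getD_eq_getElem, hi.trans hj, hj] using hlt i hi

end List

namespace BTree

theorem length_depths_pos (t : BTree) : 0 < t.depths.length := by
  induction t with
  | leaf => simp [depths]
  | node l _ ihl _ => simp [depths]; omega

theorem eq_leaf_or_getElem?_succ_depths_eq {t : BTree} {j : ℕ} (h : t.depths.IsLeftmostMax j) :
    t = .leaf ∨ t.depths[j + 1]? = t.depths[j]? := by
  induction t generalizing j with
  | leaf => exact .inl rfl
  | node l r ihl ihr =>
    right
    have h' : (l.depths ++ r.depths).IsLeftmostMax j := h.of_map (add_left_strictMono (a := 1))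
    simp only [depths, List.getElem?_map]
    congr 1
    by_cases hj : j < l.depths.length
    · rcases ihl (h'.of_append_left hj) with rfl | hl
      · obtain rfl : j = 0 := by simpa [depths] using hj
        have h1 : r.depths[0]'r.length_depths_pos ≤ 0 :=
          h'.le 1 (by simpa [depths] using r.length_depths_pos)
        show r.depths[0]? = some 0
        rw [List.getElem?_eq_getElem r.length_depths_pos, Nat.le_zero.mp h1]
      · rwa [List.getElem?_append_left hj,
          List.getElem?_append_left (List.lt_length_of_getElem?_eq hl hj)]
    · push Not at hj
      rcases ihr (h'.of_append_right hj) with rfl | hr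
      · obtain rfl : j = l.depths.length := by
          have := h'.lt_length
          simp only [List.length_append, depths, List.length_singleton] at this
          omega
        have h0 := h'.lt 0 l.length_depths_pos
        simp [depths] at h0
      · rwa [List.getElem?_append_right hj, List.getElem?_append_right (by omega),
          Nat.sub_add_comm hj]

end BTree

/-- In a full binary tree with at least two leaves, the leftmost leaf of maximal
depth (index `j`) has the next leaf `j+1` as its sibling: in particular `j+1` is a
valid leaf index and leaves `j` and `j+1` have equal depth. -/
theorem stmt7 (t : BTree) (h2 : 2 ≤ t.numLeaves) (j : ℕ) (hj : j < t.numLeaves)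
    (hmax : ∀ i < t.numLeaves, t.depths.getD i 0 ≤ t.depths.getD j 0)
    (hleft : ∀ i < j, t.depths.getD i 0 < t.depths.getD j 0) :
    j + 1 < t.numLeaves ∧ t.depths.getD (j + 1) 0 = t.depths.getD j 0 := by
  rcases BTree.eq_leaf_or_getElem?_succ_depths_eq (.of_getD 0 hj hmax hleft) with rfl | hsucc
  · simp [BTree.numLeaves, BTree.depths] at h2
  · exact ⟨List.lt_length_of_getElem?_eq hsucc hj,
      by rw [List.getD_eq_getElem?_getD, hsucc, List.getD_eq_getElem?_getD]⟩
end

section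
/- Let n ≥ 0 and let (d_0,...,d_n) ∈ {0,1}^{n+1} be admissible, meaning: (i) if n ≥ 1 then d_j = d_{j+1} for some 0 ≤ j ≤ n-1, and (ii) n + #{i : d_i = 0} ≡ 1 (mod 3). Then there exists a full binary tree t with n+1 leaves such that the depth of leaf i is congruent to d_i modulo 2 for every i. -/
/-- A binary sequence `(d_0,...,d_n)` (encoded as `v : Fin (n+1) → Fin 2`) is
admissible if it is non-alternating (when `n ≥ 1`, two consecutive entries agree)
and `n + #{i : d_i = 0} ≡ 1 (mod 3)`. -/
def AdmissibleSeq {n : ℕ} (v : Fin (n + 1) → Fin 2) : Prop :=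
  (1 ≤ n → ∃ j : Fin n, v j.castSucc = v j.succ) ∧
  (n + (Finset.univ.filter (fun i => v i = 0)).card) % 3 = 1

namespace BTree

lemma depths_node_map_add (l r : BTree) (k : ℕ) :
    (node l r).depths.map (· + k) = l.depths.map (· + (k + 1)) ++ r.depths.map (· + (k + 1)) := by
  simp only [depths, List.map_map, List.map_append]
  congr 2 <;> funext d <;> simp only [Function.comp_apply] <;> omega

/-- The shift `k` makes the statement stable under passing to subtrees (`depths_node_map_add`). -/
lemma exists_depths_map_add_split (t : BTree) (k : ℕ) (u w : List ℕ) (d : ℕ)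
    (ht : t.depths.map (· + k) = u ++ d :: w) :
    ∃ t' : BTree, t'.depths.map (· + k) = u ++ (d + 1) :: (d + 1) :: w := by
  induction t generalizing k u w with
  | leaf =>
    obtain ⟨rfl, rfl, rfl⟩ : u = [] ∧ d = k ∧ w = [] := by
      rcases u with _ | ⟨_, _ | _⟩ <;> simp_all [depths, eq_comm]
    exact ⟨node leaf leaf, by simp [depths, Nat.add_comm]⟩
  | node l r ihl ihr =>
    rw [depths_node_map_add] at ht
    rcases List.append_eq_append_iff.mp ht with ⟨a, rfl, hr⟩ | ⟨_ | ⟨c, a⟩, hl, hr⟩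
    · obtain ⟨r', hr'⟩ := ihr (k + 1) a w hr
      exact ⟨node l r', by rw [depths_node_map_add, hr', List.append_assoc]⟩
    · obtain ⟨r', hr'⟩ := ihr (k + 1) [] w hr.symm
      rw [List.append_nil] at hl
      exact ⟨node l r', by rw [depths_node_map_add, hr', hl, List.nil_append]⟩
    · simp only [List.cons_append, List.cons.injEq] at hr
      obtain ⟨rfl, rfl⟩ := hr
      obtain ⟨l', hl'⟩ := ihl (k + 1) u a hl
      exact ⟨node l' r, by rw [depths_node_map_add, hl']; simp⟩

def parities (t : BTree) : List (Fin 2) := t.depths.map (Fin.ofNat 2)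

lemma exists_parities_split {t : BTree} {u w : List (Fin 2)} {b : Fin 2}
    (ht : t.parities = u ++ b :: w) : ∃ t' : BTree, t'.parities = u ++ (b + 1) :: (b + 1) :: w := by
  obtain ⟨U, dW, hdepths, rfl, hdW⟩ := List.map_eq_append_iff.mp ht
  obtain ⟨d, W, rfl, rfl, rfl⟩ := List.map_eq_cons_iff.mp hdW
  obtain ⟨t', ht'⟩ := exists_depths_map_add_split t 0 U W d (by simp [hdepths])
  refine ⟨t', ?_⟩
  simp only [add_zero, List.map_id'] at ht'
  simp [parities, ht', Fin.ext_iff, Fin.val_add]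

end BTree

theorem List.exists_eq_append_cons_cons_not_isChain {α : Type*} [Nontrivial α] :
    ∀ l : List α, 3 ≤ l.length → ¬ l.IsChain (· ≠ ·) → (∀ a, l ≠ [a, a, a]) →
      ∃ u a b w, a ≠ b ∧ l = u ++ a :: a :: w ∧ ¬ (u ++ b :: w).IsChain (· ≠ ·)
  | [], h3, _, _ | [_], h3, _, _ | [_, _], h3, _, _ => by simp at h3
  | c :: d :: e :: rest, _, hpair, hne => by
    by_cases hcd : c = d
    · subst hcd
      by_cases hce : c = e
      · subst hce
        match rest with
        | [] => exact absurd rfl (hne c)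
        | f :: r =>
          by_cases hcf : c = f
          · obtain ⟨b, hb⟩ := exists_ne c
            exact ⟨[], c, b, c :: f :: r, hb.symm, rfl, by simp [hcf]⟩
          · exact ⟨[c], c, f, f :: r, hcf, rfl, by simp⟩
      · exact ⟨[], c, e, e :: rest, hce, rfl, by simp⟩
    · by_cases hde : d = e
      · subst hde
        exact ⟨[c], d, c, rest, Ne.symm hcd, rfl, by simp⟩
      · have h3 : 3 ≤ (d :: e :: rest).length := by
          rcases rest with _ | _
          · simp [hcd, hde] at hpair
          · simp
        obtain ⟨u, a, b, w, hab, hl, hs⟩ := exists_eq_append_cons_cons_not_isChain (d :: e :: rest) h3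
          (fun h => hpair (.cons_cons hcd h)) (fun a h => by simp_all)
        exact ⟨c :: u, a, b, w, hab, by simp [hl], fun h => hs h.tail⟩

/-- `AdmissibleSeq` for the list `[d_0, …, d_n]`; the paper's `n` is `l.length - 1`, whence the
residue `2`. -/
def AdmissibleList (l : List (Fin 2)) : Prop :=
  (2 ≤ l.length → ¬ l.IsChain (· ≠ ·)) ∧ (l.length + l.count 0) % 3 = 2

lemma length_add_count_zero_split_mod_three (u w : List (Fin 2)) (b : Fin 2) :
    ((u ++ (b + 1) :: (b + 1) :: w).length + (u ++ (b + 1) :: (b + 1) :: w).count 0) % 3 =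
      ((u ++ b :: w).length + (u ++ b :: w).count 0) % 3 := by
  fin_cases b <;> simp [List.count_append] <;> omega

lemma AdmissibleList.exists_parities_eq_of_length_lt_three :
    ∀ {l : List (Fin 2)}, AdmissibleList l → l.length < 3 → ∃ t : BTree, t.parities = l
  | [], ⟨_, hmod⟩, _ => by simp at hmod
  | [b], ⟨_, hmod⟩, _ => by
    fin_cases b
    · exact ⟨.leaf, rfl⟩
    · simp at hmod
  | [a, b], ⟨hpair, hmod⟩, _ => by
    obtain rfl : a = b := by simpa using hpair
    fin_cases a
    · simp at hmod
    · exact ⟨.node .leaf .leaf, rfl⟩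
  | _ :: _ :: _ :: _, _, h => by simp only [List.length_cons] at h; omega

lemma AdmissibleList.exists_eq_split {l : List (Fin 2)} (hl : AdmissibleList l)
    (h3 : 3 ≤ l.length) :
    ∃ u b w, l = u ++ (b + 1) :: (b + 1) :: w ∧ AdmissibleList (u ++ b :: w) := by
  obtain ⟨hpair, hmod⟩ := hl
  have hne : ∀ a, l ≠ [a, a, a] := by
    rintro a rfl
    fin_cases a <;> simp at hmod
  obtain ⟨u, a, b, w, hab, rfl, hs⟩ :=
    l.exists_eq_append_cons_cons_not_isChain h3 (hpair (by omega)) hne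
  obtain rfl : a = b + 1 := by omega
  exact ⟨u, b, w, rfl, fun _ => hs, by rwa [← length_add_count_zero_split_mod_three]⟩

theorem AdmissibleList.exists_parities_eq {l : List (Fin 2)} (hl : AdmissibleList l) :
    ∃ t : BTree, t.parities = l := by
  induction hn : l.length using Nat.strong_induction_on generalizing l with
  | _ n ih =>
  rcases lt_or_ge l.length 3 with hsmall | h3
  · exact hl.exists_parities_eq_of_length_lt_three hsmall
  · obtain ⟨u, b, w, rfl, hshort⟩ := hl.exists_eq_split h3
    obtain ⟨t, ht⟩ := ih _ (by simp only [List.length_append, List.length_cons] at hn ⊢; omega) hshort rfl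
    exact BTree.exists_parities_split ht

lemma count_zero_ofFn {n : ℕ} (v : Fin n → Fin 2) :
    (List.ofFn v).count 0 = (Finset.univ.filter (fun i => v i = 0)).card := by
  simpa using (Fin.card_filter_univ_eq_vector_get_eq_count 0 (List.Vector.ofFn v)).symm

lemma AdmissibleSeq.admissibleList_ofFn {n : ℕ} {v : Fin (n + 1) → Fin 2}
    (hv : AdmissibleSeq v) : AdmissibleList (List.ofFn v) := by
  obtain ⟨hpair, hmod⟩ := hv
  refine ⟨fun hlen hchain => ?_, by rw [List.length_ofFn, count_zero_ofFn]; omega⟩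
  obtain ⟨j, hj⟩ := hpair (by rw [List.length_ofFn] at hlen; omega)
  exact List.isChain_ofFn.mp hchain j (by omega) hj

theorem stmt8 (n : ℕ) (v : Fin (n + 1) → Fin 2) (hv : AdmissibleSeq v) :
    ∃ t : BTree, t.numLeaves = n + 1 ∧
      ∀ i : Fin (n + 1), t.depths.getD i 0 % 2 = (v i : ℕ) := by
  obtain ⟨t, ht⟩ := hv.admissibleList_ofFn.exists_parities_eq
  have hlen : t.depths.length = n + 1 := by
    simpa [BTree.parities] using congrArg List.length ht
  refine ⟨t, hlen, fun i => ?_⟩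
  have hi : (i : ℕ) < t.depths.length := by rw [hlen]; exact i.isLt
  have hparity := List.getElem_of_eq ht (by simpa [BTree.parities] using hi)
  simp only [BTree.parities, List.getElem_map, List.getElem_ofFn] at hparity
  rw [List.getD_eq_getElem _ _ hi, ← Fin.val_ofNat, hparity]
end

section
/- Every parenthesization of x_0 ⊖ x_1 ⊖ ⋯ ⊖ x_n, where a ⊖ b = -a - b, evaluates to Σ_{i=0}^{n} (-1)^{d_i(t)} x_i, where t is the full binary tree with n+1 leaves corresponding to the parenthesization and d_i(t) is the depth of leaf i in t. -/
/-- Evaluate the parenthesization of `x_k ⊖ ⋯ ⊖ x_{k+m}` corresponding to a full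
binary tree with `m+1` leaves, where `a ⊖ b := -a - b` and leaves are the
variables read left to right starting from index `k`. -/
def BTree.eval (x : ℕ → ℤ) : BTree → ℕ → ℤ
  | .leaf, k => x k
  | .node l r, k => -(BTree.eval x l k) - BTree.eval x r (k + l.numLeaves)

/-! Negating a subtree's value flips the parity of every leaf depth in it, and the root of
`node l r` sits one level above those of `l` and `r`; so by induction on the tree, with the
index of the first leaf as a parameter, each leaf contributes `(-1) ^ depth` times its
variable. -/

namespace BTree

theorem numLeaves_node (l r : BTree) : (node l r).numLeaves = l.numLeaves + r.numLeaves := by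
  simp [numLeaves, depths]

theorem depths_getD_node_of_lt {l r : BTree} {i : ℕ} (hi : i < l.numLeaves + r.numLeaves) :
    (node l r).depths.getD i 0 = (l.depths ++ r.depths).getD i 0 + 1 := by
  have hi' : i < (l.depths ++ r.depths).length := by simpa [numLeaves] using hi
  rw [depths, List.getD_eq_getElem _ _ (by simpa using hi'), List.getD_eq_getElem _ _ hi',
    List.getElem_map]

theorem depths_getD_node_left {l : BTree} (r : BTree) {i : ℕ} (hi : i < l.numLeaves) :
    (node l r).depths.getD i 0 = l.depths.getD i 0 + 1 := by
  rw [depths_getD_node_of_lt (by omega), List.getD_append _ _ _ _ hi]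

theorem depths_getD_node_right (l : BTree) {r : BTree} {i : ℕ} (hi : i < r.numLeaves) :
    (node l r).depths.getD (l.numLeaves + i) 0 = r.depths.getD i 0 + 1 := by
  rw [depths_getD_node_of_lt (by omega), List.getD_append_right _ _ _ _ (by simp [numLeaves]),
    numLeaves, Nat.add_sub_cancel_left]

theorem eval_eq_sum (x : ℕ → ℤ) (t : BTree) (k : ℕ) :
    t.eval x k = ∑ i ∈ Finset.range t.numLeaves, (-1) ^ t.depths.getD i 0 * x (k + i) := by
  induction t generalizing k with
  | leaf => simp [eval, numLeaves, depths]
  | node l r ihl ihr =>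
    rw [eval, ihl, ihr, numLeaves_node, Finset.sum_range_add, sub_eq_add_neg,
      ← Finset.sum_neg_distrib, ← Finset.sum_neg_distrib]
    congr 1 <;> refine Finset.sum_congr rfl fun i hi => ?_
    · rw [depths_getD_node_left r (Finset.mem_range.1 hi), pow_succ]
      ring
    · rw [depths_getD_node_right l (Finset.mem_range.1 hi), pow_succ, add_assoc]
      ring

end BTree

theorem stmt9 (t : BTree) (x : ℕ → ℤ) :
    t.eval x 0 = ∑ i ∈ Finset.range t.numLeaves, (-1) ^ t.depths.getD i 0 * x i := by
  simpa using t.eval_eq_sum x 0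
end

section
/- For n ≥ 1 and 0 ≤ r ≤ n+1, the number of sign vectors (ε_0,...,ε_n) ∈ {+1,-1}^{n+1} with exactly r entries equal to +1 that arise as the coefficient vector of some parenthesization of x_0 ⊖ ⋯ ⊖ x_n equals: C(n+1, r) if n + r ≡ 1 (mod 3) and n ≠ 2r - 2; C(n+1, r) - 1 if n + r ≡ 1 (mod 3) and n = 2r - 2; and 0 if n + r ≢ 1 (mod 3). -/
/-!
The sign list of `node a b` is `-(signs a) ++ -(signs b)`, so every sign list has entries `±1`,
sum `≡ 1 (mod 3)` and, unless the tree is a leaf, a prefix with sum `≡ 2 (mod 3)`. Conversely,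
such a list can be cut at a prefix with sum `≡ 2` into two pieces whose negatives again satisfy
the criterion, so it is a sign list by induction on its length. A `±1` list none of whose prefix
sums is `≡ 2` is forced to be `1, -1, 1, …`; hence the realizable vectors with `r` entries `+1`
are all `C(n+1, r)` of them when `2r - (n+1) ≡ 1 (mod 3)`, except the alternating vector, which
has `r` entries `+1` exactly when `n + 2 = 2r`.
-/

namespace BTree

def signs (t : BTree) : List ℤ := t.depths.map ((-1) ^ ·)

lemma signs_node (a b : BTree) : (node a b).signs = (a.signs ++ b.signs).map (- ·) := by
  simp only [signs, depths, List.map_append, List.map_map]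
  congr 1 <;> exact List.map_congr_left fun d _ => by simp [pow_succ]

lemma length_signs (t : BTree) : t.signs.length = t.numLeaves := by
  simp [signs, numLeaves]

lemma signs_mem (t : BTree) : ∀ x ∈ t.signs, x = 1 ∨ x = -1 := by
  simp only [signs, List.mem_map]
  rintro _ ⟨d, -, rfl⟩
  exact neg_one_pow_eq_or ℤ d

lemma sum_signs_emod_three (t : BTree) : t.signs.sum % 3 = 1 := by
  induction t with
  | leaf => rfl
  | node a b iha ihb =>
    rw [signs_node, ← List.sum_neg, List.sum_append]
    omega

end BTree

open BTree

def IsAdmissible (l : List ℤ) : Prop :=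
  (∀ x ∈ l, x = 1 ∨ x = -1) ∧ l.sum % 3 = 1 ∧ (l = [1] ∨ ∃ k, (l.take k).sum % 3 = 2)

lemma isAdmissible_signs (t : BTree) : IsAdmissible t.signs := by
  refine ⟨t.signs_mem, t.sum_signs_emod_three, ?_⟩
  cases t with
  | leaf => exact Or.inl rfl
  | node a b =>
    refine Or.inr ⟨a.signs.length, ?_⟩
    rw [signs_node, ← List.map_take, List.take_left' rfl, ← List.sum_neg]
    have := a.sum_signs_emod_three
    omega

section Split

variable {l : List ℤ}

lemma isAdmissible_map_neg {p : List ℤ} (hp : ∀ x ∈ p, x = 1 ∨ x = -1)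
    (hsum : p.sum % 3 = 2) (h : p = [-1] ∨ ∃ j, (p.take j).sum % 3 = 1) :
    IsAdmissible (p.map (- ·)) := by
  refine ⟨?_, ?_, ?_⟩
  · simp only [List.mem_map]
    rintro _ ⟨x, hx, rfl⟩
    rcases hp x hx with rfl | rfl <;> simp
  · rw [← List.sum_neg]
    omega
  · rcases h with rfl | ⟨j, hj⟩
    · exact Or.inl rfl
    · refine Or.inr ⟨j, ?_⟩
      rw [← List.map_take, ← List.sum_neg]
      omega

lemma isAdmissible_map_neg_take (hl : ∀ x ∈ l, x = 1 ∨ x = -1) {k : ℕ}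
    (hk : (l.take k).sum % 3 = 2) (h : l.take k = [-1] ∨ ∃ j ≤ k, (l.take j).sum % 3 = 1) :
    IsAdmissible ((l.take k).map (- ·)) := by
  refine isAdmissible_map_neg (fun x hx => hl x (List.mem_of_mem_take hx)) hk (h.imp_right ?_)
  rintro ⟨j, hjk, hj⟩
  exact ⟨j, by rwa [List.take_take, min_eq_left hjk]⟩

lemma isAdmissible_map_neg_drop (hl : ∀ x ∈ l, x = 1 ∨ x = -1) (hsum : l.sum % 3 = 1)
    {k : ℕ} (hk : (l.take k).sum % 3 = 2)
    (h : l.drop k = [-1] ∨ ∃ j ≥ k, (l.take j).sum % 3 = 0) :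
    IsAdmissible ((l.drop k).map (- ·)) := by
  have := List.sum_take_add_sum_drop l k
  refine isAdmissible_map_neg (fun x hx => hl x (List.mem_of_mem_drop hx)) (by omega)
    (h.imp_right ?_)
  rintro ⟨j, hkj, hj⟩
  refine ⟨j - k, ?_⟩
  rw [← Nat.add_sub_cancel' hkj, List.take_add, List.sum_append] at hj
  omega

lemma sum_take_succ_of_mem (hl : ∀ x ∈ l, x = 1 ∨ x = -1) {j : ℕ} (hj : j < l.length) :
    (l.take (j + 1)).sum = (l.take j).sum + 1 ∨ (l.take (j + 1)).sum = (l.take j).sum - 1 := by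
  rw [List.sum_take_succ l j hj]
  rcases hl _ (List.getElem_mem hj) with h | h <;> simp [h, sub_eq_add_neg]

lemma isAdmissible_map_neg_take_of_forall_lt (hl : ∀ x ∈ l, x = 1 ∨ x = -1) {k : ℕ}
    (hk_pos : 0 < k) (hk_lt : k < l.length) (hk : (l.take k).sum % 3 = 2)
    (hmin : ∀ j < k, (l.take j).sum % 3 ≠ 2) : IsAdmissible ((l.take k).map (- ·)) := by
  refine isAdmissible_map_neg_take hl hk ?_
  rcases sum_take_succ_of_mem hl (j := 0) (by omega) with h₁ | h₁
  · exact Or.inr ⟨1, hk_pos, by simp_all⟩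
  · obtain rfl : k = 1 := by
      by_contra hk₁
      exact hmin 1 (by omega) (by simp_all)
    obtain ⟨x, l, rfl⟩ := List.exists_cons_of_length_pos (by omega : 0 < l.length)
    simp_all

lemma drop_length_sub_one_of_forall_ge (hl : ∀ x ∈ l, x = 1 ∨ x = -1) (hsum : l.sum % 3 = 1)
    {k : ℕ} (hk_lt : k < l.length) (hzero : ∀ j ≥ k, (l.take j).sum % 3 ≠ 0) :
    l.drop (l.length - 1) = [-1] ∧ (l.take (l.length - 1)).sum % 3 = 2 := by
  have hlast := List.sum_take_succ l (l.length - 1) (by omega)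
  rw [Nat.sub_add_cancel (by omega), List.take_length] at hlast
  have hne := hzero (l.length - 1) (by omega)
  have hget : l[l.length - 1] = -1 := by
    rcases hl _ (List.getElem_mem _) with h | h
    · rw [h] at hlast
      omega
    · exact h
  refine ⟨?_, by omega⟩
  rw [List.drop_eq_getElem_cons (by omega), Nat.sub_add_cancel (by omega), List.drop_length, hget]

/-- Cut at the first partial sum `≡ 2`: the left piece is then admissible. If the right piece is
not, the partial sums never return to `0` afterwards, and cutting off the last letter works. -/
lemma exists_admissible_split (hl : ∀ x ∈ l, x = 1 ∨ x = -1) (hsum : l.sum % 3 = 1)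
    (htwo : ∃ k, (l.take k).sum % 3 = 2) :
    ∃ k, 0 < k ∧ k < l.length ∧
      IsAdmissible ((l.take k).map (- ·)) ∧ IsAdmissible ((l.drop k).map (- ·)) := by
  classical
  obtain ⟨hk₁, hmin⟩ := And.intro (Nat.find_spec htwo) fun j => Nat.find_min htwo (m := j)
  set k₁ := Nat.find htwo
  have hk₁_pos : 0 < k₁ := Nat.pos_of_ne_zero fun h => by simp [h] at hk₁
  have hk₁_lt : k₁ < l.length := by
    by_contra! h
    rw [List.take_of_length_le h] at hk₁
    omega
  have hleft := isAdmissible_map_neg_take_of_forall_lt hl hk₁_pos hk₁_lt hk₁ hmin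
  by_cases hzero : ∃ j ≥ k₁, (l.take j).sum % 3 = 0
  · exact ⟨k₁, hk₁_pos, hk₁_lt, hleft,
      isAdmissible_map_neg_drop hl hsum hk₁ (Or.inr hzero)⟩
  push Not at hzero
  obtain ⟨hdrop, hlast⟩ := drop_length_sub_one_of_forall_ge hl hsum hk₁_lt hzero
  have hright := isAdmissible_map_neg_drop hl hsum hlast (Or.inl hdrop)
  rcases eq_or_lt_of_le (show k₁ ≤ l.length - 1 by omega) with h | h
  · exact ⟨k₁, hk₁_pos, hk₁_lt, hleft, h ▸ hright⟩
  · refine ⟨l.length - 1, by omega, by omega,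
      isAdmissible_map_neg_take hl hlast (Or.inr ⟨k₁ + 1, h, ?_⟩), hright⟩
    have := hzero (k₁ + 1) (by omega)
    rcases sum_take_succ_of_mem hl hk₁_lt with h' | h' <;> omega

end Split

lemma exists_signs_eq_of_isAdmissible :
    ∀ {l : List ℤ}, IsAdmissible l → ∃ t : BTree, t.signs = l
  | l, ⟨hl, hsum, hsplit⟩ => by
    rcases hsplit with rfl | htwo
    · exact ⟨.leaf, rfl⟩
    obtain ⟨k, hk_pos, hk_lt, hleft, hright⟩ := exists_admissible_split hl hsum htwo
    have : ((l.take k).map (- ·)).length < l.length := by simp; omega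
    have : ((l.drop k).map (- ·)).length < l.length := by simp; omega
    obtain ⟨a, ha⟩ := exists_signs_eq_of_isAdmissible hleft
    obtain ⟨b, hb⟩ := exists_signs_eq_of_isAdmissible hright
    refine ⟨.node a b, ?_⟩
    rw [signs_node, ha, hb, ← List.map_append, List.take_append_drop, List.map_map]
    simp
termination_by l => l.length

theorem exists_signs_eq_iff {l : List ℤ} : (∃ t : BTree, t.signs = l) ↔ IsAdmissible l :=
  ⟨fun ⟨t, ht⟩ => ht ▸ isAdmissible_signs t, exists_signs_eq_of_isAdmissible⟩

def altSigns (m : ℕ) : List ℤ := List.ofFn fun i : Fin m => (-1) ^ (i : ℕ)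

lemma altSigns_succ (m : ℕ) : altSigns (m + 1) = 1 :: (altSigns m).map (- ·) := by
  simp [altSigns, List.ofFn_succ, List.map_ofFn, Function.comp_def, pow_succ]

lemma sum_altSigns (m : ℕ) : (altSigns m).sum = m % 2 := by
  induction m with
  | zero => rfl
  | succ m ih =>
    rw [altSigns_succ, List.sum_cons, ← List.sum_neg, ih]
    omega

lemma forall_sum_take_cons_emod_ne_two_iff (x : ℤ) (l : List ℤ) :
    (∀ k, ((x :: l).take k).sum % 3 ≠ 2) ↔ ∀ k, (x + (l.take k).sum) % 3 ≠ 2 := by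
  refine ⟨fun h k => by simpa using h (k + 1), fun h k => ?_⟩
  cases k with
  | zero => simp
  | succ k => simpa using h k

lemma forall_sum_take_emod_ne_two_iff :
    ∀ {l : List ℤ}, (∀ x ∈ l, x = 1 ∨ x = -1) →
      ((∀ k, (l.take k).sum % 3 ≠ 2) ↔ l = altSigns l.length)
  | [], _ => by simp [altSigns]
  | x :: l, hl => by
    rw [forall_sum_take_cons_emod_ne_two_iff, List.length_cons, altSigns_succ, List.cons.injEq]
    rcases hl x List.mem_cons_self with rfl | rfl
    · have hpm : ∀ y ∈ l.map (- ·), y = 1 ∨ y = -1 := by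
        simp only [List.mem_map]
        rintro _ ⟨y, hy, rfl⟩
        rcases hl y (List.mem_cons_of_mem 1 hy) with rfl | rfl <;> simp
      have ih := forall_sum_take_emod_ne_two_iff hpm
      rw [List.length_map, ← (List.map_injective_iff.mpr neg_injective).eq_iff, List.map_map,
        neg_comp_neg, List.map_id] at ih
      simp only [true_and, ← ih, ← List.map_take, ← List.sum_neg]
      exact forall_congr' fun k => by omega
    · exact iff_of_false (fun h => h 0 (by simp)) (by simp)
termination_by l => l.length

lemma exists_tree_iff_exists_signs_eq {m : ℕ} (ε : Fin m → ℤ) :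
    (∃ t : BTree, t.numLeaves = m ∧ ∀ i : Fin m, ε i = (-1) ^ t.depths.getD i 0) ↔
      ∃ t : BTree, t.signs = List.ofFn ε := by
  refine exists_congr fun t => ⟨fun ⟨hm, h⟩ => ?_, fun h => ?_⟩
  · refine List.ext_getElem (by simp [length_signs, hm]) fun i h₁ h₂ => ?_
    have hi : i < t.depths.length := by simpa [signs] using h₁
    simp [signs, h ⟨i, by simpa using h₂⟩, List.getElem?_eq_getElem hi]
  · have hm : t.numLeaves = m := by rw [← length_signs, h, List.length_ofFn]
    refine ⟨hm, fun i => ?_⟩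
    have hi : i < t.depths.length := hm ▸ i.2
    simpa [signs, List.getElem?_eq_getElem hi] using
      (List.getElem_of_eq h (i := i) (by simpa [signs] using hi)).symm

lemma isAdmissible_ofFn_iff {m : ℕ} (hm : 2 ≤ m) (ε : Fin m → ℤ) :
    IsAdmissible (List.ofFn ε) ↔
      (∀ i, ε i = 1 ∨ ε i = -1) ∧ (∑ i, ε i) % 3 = 1 ∧
        ε ≠ fun i : Fin m => (-1) ^ (i : ℕ) := by
  rw [IsAdmissible, List.forall_mem_ofFn_iff, List.sum_ofFn]
  refine and_congr_right fun hε => and_congr_right fun _ => ?_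
  have hne : List.ofFn ε ≠ [1] := fun h => by have := congrArg List.length h; simp at this; omega
  rw [or_iff_right hne, ← not_forall_not, not_congr]
  rw [forall_sum_take_emod_ne_two_iff (List.forall_mem_ofFn_iff.mpr hε), List.length_ofFn,
    altSigns, List.ofFn_inj]

def signVectors (m r : ℕ) : Set (Fin m → ℤ) :=
  {ε | (∀ i, ε i = 1 ∨ ε i = -1) ∧ (Finset.univ.filter (fun i => ε i = 1)).card = r}

lemma ncard_signVectors (m r : ℕ) : (signVectors m r).ncard = m.choose r := by
  set f : Finset (Fin m) → Fin m → ℤ := fun s i => if i ∈ s then 1 else -1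
  have hinj : f.Injective := fun s s' h => Finset.ext fun i => by
    have := congrFun h i
    by_cases hs : i ∈ s <;> by_cases hs' : i ∈ s' <;> simp [f, hs, hs'] at this ⊢
  have himage : signVectors m r =
      f '' ((Finset.univ : Finset (Fin m)).powersetCard r : Set (Finset (Fin m))) := by
    ext ε
    simp only [signVectors, Set.mem_ofPred_eq, Set.mem_image, Finset.mem_coe,
      Finset.mem_powersetCard, Finset.subset_univ, true_and]
    constructor
    · rintro ⟨hε, hr⟩
      refine ⟨_, hr, funext fun i => ?_⟩
      rcases hε i with h | h <;> simp [f, h]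
    · rintro ⟨s, rfl, rfl⟩
      refine ⟨fun i => ?_, congrArg _ (Finset.ext fun i => ?_)⟩ <;>
        by_cases hi : i ∈ s <;> simp [f, hi]
  rw [himage, Set.ncard_image_of_injective _ hinj, Set.ncard_coe_finset,
    Finset.card_powersetCard, Finset.card_univ, Fintype.card_fin]

lemma sum_eq_two_mul_card_sub {m : ℕ} {ε : Fin m → ℤ} (hε : ∀ i, ε i = 1 ∨ ε i = -1) :
    ∑ i, ε i = 2 * (Finset.univ.filter (fun i => ε i = 1)).card - m := by
  calc ∑ i, ε i = ∑ i, (2 * (if ε i = 1 then 1 else 0) - 1) :=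
        Finset.sum_congr rfl fun i _ => by rcases hε i with h | h <;> simp [h]
    _ = _ := by
      rw [Finset.sum_sub_distrib, ← Finset.mul_sum, Finset.sum_boole]
      simp

lemma card_filter_neg_one_pow_eq_one (m : ℕ) :
    (Finset.univ.filter fun i : Fin m => (-1 : ℤ) ^ (i : ℕ) = 1).card = (m + 1) / 2 := by
  have h := sum_eq_two_mul_card_sub fun i : Fin m => neg_one_pow_eq_or ℤ i
  rw [← List.sum_ofFn, ← altSigns, sum_altSigns] at h
  omega

lemma setOf_exists_tree_eq {m : ℕ} (hm : 2 ≤ m) (r : ℕ) :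
    {ε : Fin m → ℤ | (∃ t : BTree, t.numLeaves = m ∧
          ∀ i : Fin m, ε i = (-1) ^ t.depths.getD i 0) ∧
        (Finset.univ.filter (fun i => ε i = 1)).card = r} =
      {ε | ε ∈ signVectors m r ∧ (∑ i, ε i) % 3 = 1 ∧
        ε ≠ fun i : Fin m => (-1) ^ (i : ℕ)} := by
  ext ε
  simp only [Set.mem_ofPred_eq, exists_tree_iff_exists_signs_eq, exists_signs_eq_iff,
    isAdmissible_ofFn_iff hm, signVectors]
  tauto

theorem stmt10_general (n r : ℕ) (hn : 1 ≤ n) :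
    Set.ncard {ε : Fin (n + 1) → ℤ |
        (∃ t : BTree, t.numLeaves = n + 1 ∧
          ∀ i : Fin (n + 1), ε i = (-1) ^ t.depths.getD i 0) ∧
        (Finset.univ.filter (fun i => ε i = 1)).card = r} =
      if (n + r) % 3 = 1 then
        (if n + 2 = 2 * r then Nat.choose (n + 1) r - 1 else Nat.choose (n + 1) r)
      else 0 := by
  rw [setOf_exists_tree_eq (by omega), ← ncard_signVectors]
  set alt : Fin (n + 1) → ℤ := fun i => (-1) ^ (i : ℕ)
  have hsum : ∀ ε ∈ signVectors (n + 1) r, (∑ i, ε i) % 3 = 1 ↔ (n + r) % 3 = 1 := by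
    rintro ε ⟨hε, hr⟩
    rw [sum_eq_two_mul_card_sub hε, hr]
    omega
  have halt : alt ∈ signVectors (n + 1) r ↔ (n + 2) / 2 = r := by
    simp only [signVectors, Set.mem_ofPred_eq, alt, card_filter_neg_one_pow_eq_one]
    exact and_iff_right fun i => neg_one_pow_eq_or ℤ i
  have hset : {ε | ε ∈ signVectors (n + 1) r ∧ (∑ i, ε i) % 3 = 1 ∧ ε ≠ alt} =
      if (n + r) % 3 = 1 then signVectors (n + 1) r \ {alt} else ∅ := by
    ext ε
    split_ifs with h₃ <;> simp +contextual [hsum, h₃]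
  rw [hset]
  split_ifs with h₃ h₂
  · exact Set.ncard_sdiff_singleton_of_mem (halt.mpr (by omega))
  · rw [Set.sdiff_singleton_eq_self (mt halt.mp (by omega))]
  · exact Set.ncard_empty _

theorem stmt10 (n r : ℕ) (hn : 1 ≤ n) (hr : r ≤ n + 1) :
    Set.ncard {ε : Fin (n + 1) → ℤ |
        (∃ t : BTree, t.numLeaves = n + 1 ∧
          ∀ i : Fin (n + 1), ε i = (-1) ^ t.depths.getD i 0) ∧
        (Finset.univ.filter (fun i => ε i = 1)).card = r} =
      if (n + r) % 3 = 1 then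
        (if n + 2 = 2 * r then Nat.choose (n + 1) r - 1 else Nat.choose (n + 1) r)
      else 0 :=
  stmt10_general n r hn
end

section
/- For n ≥ 1, the number of admissible binary sequences in {0,1}^{n+1} equals A_n, where A_1 = 1 and A_n = 2^n - 1 - A_{n-1} for n ≥ 2. -/
open Finset Fin.NatCast

def zeroCount {m : ℕ} (v : Fin m → Fin 2) : ℕ := #{i | v i = 0}

lemma zeroCount_cons {m : ℕ} (b : Fin 2) (w : Fin m → Fin 2) :
    zeroCount (Fin.cons b w : Fin (m + 1) → Fin 2) = (if b = 0 then 1 else 0) + zeroCount w := by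
  rw [zeroCount, zeroCount, card_filter, card_filter, Fin.sum_univ_succ]
  simp

def residueCount (k m : ℕ) : ℕ := #{v : Fin m → Fin 2 | (k + zeroCount v) % 3 = 1}

lemma residueCount_succ_add (k m : ℕ) :
    residueCount (k + 1) (m + 1) + residueCount k m = 2 ^ m := by
  have exactly_one (w : Fin m → Fin 2) :
      (∑ b : Fin 2, if (k + 1 + zeroCount (Fin.cons b w : Fin (m + 1) → Fin 2)) % 3 = 1
        then 1 else 0) + (if (k + zeroCount w) % 3 = 1 then 1 else 0) = 1 := by
    simp only [Fin.sum_univ_two, zeroCount_cons]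
    split_ifs <;> omega
  have split_head : residueCount (k + 1) (m + 1) = ∑ w : Fin m → Fin 2, ∑ b : Fin 2,
      if (k + 1 + zeroCount (Fin.cons b w : Fin (m + 1) → Fin 2)) % 3 = 1 then 1 else 0 := by
    rw [residueCount, card_filter, ← (Fin.consEquiv fun _ => Fin 2).sum_comp,
      Fintype.sum_prod_type, sum_comm]
    rfl
  rw [split_head, residueCount, card_filter, ← sum_add_distrib,
    sum_congr rfl fun w _ => exactly_one w]
  simp

def IsAlternating {n : ℕ} (v : Fin (n + 1) → Fin 2) : Prop := ∀ j : Fin n, v j.castSucc ≠ v j.succ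

instance {n : ℕ} : DecidablePred (@IsAlternating n) :=
  fun _ => inferInstanceAs (Decidable (∀ _, _))

def alternating (n : ℕ) (b : Fin 2) : Fin (n + 1) → Fin 2 := fun i => b + (i : ℕ)

lemma alternating_succ (n : ℕ) (b : Fin 2) :
    alternating (n + 1) b = Fin.cons b (alternating n (b + 1)) := by
  funext i
  cases i using Fin.cases with
  | zero => simp [alternating]
  | succ i =>
    simp only [alternating, Fin.val_succ, Nat.cast_add, Nat.cast_one, Fin.cons_succ]
    abel

lemma isAlternating_alternating (n : ℕ) (b : Fin 2) : IsAlternating (alternating n b) := by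
  intro j
  simp [alternating]

lemma fin_two_eq_add_one_of_ne {a b : Fin 2} (h : a ≠ b) : a = b + 1 := by
  revert a b; decide

lemma IsAlternating.eq_alternating {n : ℕ} {v : Fin (n + 1) → Fin 2} (hv : IsAlternating v) :
    v = alternating n (v 0) := by
  funext i
  induction i using Fin.induction with
  | zero => simp [alternating]
  | succ i ih =>
    rw [fin_two_eq_add_one_of_ne (hv i).symm, ih]
    simp only [alternating, Fin.val_castSucc, Fin.val_succ, Nat.cast_add, Nat.cast_one]
    abel

lemma zeroCount_alternating (n : ℕ) (b : Fin 2) :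
    zeroCount (alternating n b) = (n + 2 - b) / 2 := by
  induction n generalizing b with
  | zero => revert b; decide
  | succ n ih =>
    rw [alternating_succ, zeroCount_cons, ih]
    fin_cases b <;> norm_num
    omega

lemma card_filter_and_isAlternating {n : ℕ} (P : (Fin (n + 1) → Fin 2) → Prop) [DecidablePred P] :
    #{v | P v ∧ IsAlternating v} = #{b | P (alternating n b)} := by
  refine card_bij' (fun v _ => v 0) (fun b _ => alternating n b) ?_ ?_ ?_ ?_
  · rintro v hv
    simp only [mem_filter, mem_univ, true_and] at hv ⊢
    rw [← hv.2.eq_alternating]; exact hv.1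
  · intro b hb
    simp only [mem_filter, mem_univ, true_and] at hb ⊢
    exact ⟨hb, isAlternating_alternating n b⟩
  · intro v hv
    simp only [mem_filter, mem_univ, true_and] at hv
    exact hv.2.eq_alternating.symm
  · intro b _
    simp [alternating]

instance {n : ℕ} : DecidablePred (@AdmissibleSeq n) :=
  fun _ => inferInstanceAs (Decidable (_ ∧ _))

lemma admissibleSeq_iff {n : ℕ} (hn : 1 ≤ n) (v : Fin (n + 1) → Fin 2) :
    AdmissibleSeq v ↔ (n + zeroCount v) % 3 = 1 ∧ ¬IsAlternating v := by
  simp [AdmissibleSeq, IsAlternating, zeroCount, hn, and_comm]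

lemma card_admissibleSeq_add_parity {n : ℕ} (hn : 1 ≤ n) :
    Nat.card {v : Fin (n + 1) → Fin 2 // AdmissibleSeq v} + (if n % 2 = 0 then 1 else 0) =
      residueCount n (n + 1) := by
  have alternating_count :
      #{v : Fin (n + 1) → Fin 2 | (n + zeroCount v) % 3 = 1 ∧ IsAlternating v} =
        if n % 2 = 0 then 1 else 0 := by
    rw [card_filter_and_isAlternating, card_filter, Fin.sum_univ_two]
    simp only [zeroCount_alternating]
    split_ifs <;> omega
  rw [Nat.card_eq_fintype_card, Fintype.card_subtype, ← alternating_count, residueCount,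
    filter_congr fun v _ => admissibleSeq_iff hn v, ← filter_filter, ← filter_filter,
    add_comm, card_filter_add_card_filter_not]

lemma card_admissibleSeq_succ_add {n : ℕ} (hn : 1 ≤ n) :
    Nat.card {v : Fin (n + 1 + 1) → Fin 2 // AdmissibleSeq v} +
      Nat.card {v : Fin (n + 1) → Fin 2 // AdmissibleSeq v} = 2 ^ (n + 1) - 1 := by
  have h₁ := card_admissibleSeq_add_parity (n := n + 1) (by omega)
  have h₀ := card_admissibleSeq_add_parity hn
  have := residueCount_succ_add n (n + 1)
  split_ifs at h₀ h₁ <;> omega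

lemma card_admissibleSeq_one : Nat.card {v : Fin 2 → Fin 2 // AdmissibleSeq v} = 1 := by
  have h₁ := card_admissibleSeq_add_parity (n := 1) le_rfl
  have : residueCount 1 (1 + 1) = 1 := by decide
  rwa [if_neg (by decide), add_zero, this] at h₁

theorem stmt12 (A : ℕ → ℕ) (h1 : A 1 = 1)
    (hrec : ∀ n, 2 ≤ n → A n = 2 ^ n - 1 - A (n - 1)) :
    ∀ n, 1 ≤ n →
      Nat.card {v : Fin (n + 1) → Fin 2 // AdmissibleSeq v} = A n := by
  intro n hn
  induction n, hn using Nat.le_induction with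
  | base => rw [card_admissibleSeq_one, h1]
  | succ n hn ih =>
    rw [hrec (n + 1) (by omega), Nat.add_sub_cancel, ← ih, ← card_admissibleSeq_succ_add hn]
    omega
end

section
/- For n ≥ 2: (sum of C(n+1,r) over r ≡ 1-n mod 3, 0 ≤ r ≤ n+1) + (sum of C(n,r) over r ≡ 2-n mod 3, 0 ≤ r ≤ n) = 2^n. -/
/-!
By Pascal's rule the first sum is the sum of `C(n, i)` over `i + n ≡ 1` and over `i + n ≡ 0`;
with the second sum (`i + n ≡ 2`) every `C(n, i)` is counted exactly once, giving `2 ^ n`.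
-/

open Finset

theorem Nat.sum_filter_choose_succ (p : ℕ → Prop) [DecidablePred p] (n : ℕ) :
    ∑ r ∈ (range (n + 2)).filter p, (n + 1).choose r =
      ∑ i ∈ (range (n + 1)).filter p, n.choose i +
        ∑ i ∈ (range (n + 1)).filter (fun i => p (i + 1)), n.choose i := by
  simpa only [sum_filter, mul_boole, Nat.cast_id] using
    sum_choose_succ_mul (R := ℕ) (fun i _ => if p i then 1 else 0) n

theorem stmt16_general (n : ℕ) :
    (∑ r ∈ (Finset.range (n + 2)).filter (fun r => (r + n) % 3 = 1),
        Nat.choose (n + 1) r) +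
      (∑ r ∈ (Finset.range (n + 1)).filter (fun r => (r + n) % 3 = 2),
        Nat.choose n r) = 2 ^ n := by
  rw [Nat.sum_filter_choose_succ, ← Nat.sum_range_choose n]
  simp only [sum_filter, ← sum_add_distrib]
  refine sum_congr rfl fun i _ => ?_
  rcases (by omega : (i + n) % 3 = 0 ∨ (i + n) % 3 = 1 ∨ (i + n) % 3 = 2) with h | h | h <;>
    simp [h, show (i + 1 + n) % 3 = ((i + n) % 3 + 1) % 3 by omega]

theorem stmt16 (n : ℕ) (hn : 2 ≤ n) :
    (∑ r ∈ (Finset.range (n + 2)).filter (fun r => (r + n) % 3 = 1),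
        Nat.choose (n + 1) r) +
      (∑ r ∈ (Finset.range (n + 1)).filter (fun r => (r + n) % 3 = 2),
        Nat.choose n r) = 2 ^ n :=
  stmt16_general n
end

section
/- For n ≥ 1, let B_n be the number of admissible binary sequences in {0,1}^{n+1}. Then B_1 = 1 and B_n = 2^n - 1 - B_{n-1} for all n ≥ 2. -/
/-
Let `C n` be the set of sequences of length `n + 1` with `n + #zeros ≡ 1 (mod 3)`. Prepending a bit
to a sequence `w` of `C`-residue `r` lands in `C (n + 1)` for exactly one bit if `r ≠ 1` and for no
bit if `r = 1`, so `#C (n + 1) + #C n = 2 ^ (n + 1)`. Admissible sequences are the non-alternating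
members of `C n`, and of the two alternating sequences only `0101…` with `n` even lies in `C n`;
the corrections `(n + 1) % 2` for consecutive `n` add up to `1`.
-/

open Finset

namespace BinarySeq

variable {n : ℕ}

def zeroCount {m : ℕ} (v : Fin m → Fin 2) : ℕ := #{i | v i = 0}

lemma zeroCount_cons {m : ℕ} (a : Fin 2) (w : Fin m → Fin 2) :
    zeroCount (Fin.cons a w : Fin (m + 1) → Fin 2) = (if a = 0 then 1 else 0) + zeroCount w := by
  simp only [zeroCount, card_filter, Fin.sum_univ_succ, Fin.cons_zero, Fin.cons_succ]

def congruenceSeqs (n : ℕ) : Finset (Fin (n + 1) → Fin 2) :=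
  {v | (n + zeroCount v) % 3 = 1}

lemma card_congruenceSeqs_succ_add (n : ℕ) :
    #(congruenceSeqs (n + 1)) + #(congruenceSeqs n) = 2 ^ (n + 1) := by
  have per_tail (w : Fin (n + 1) → Fin 2) :
      ∑ b : Fin 2, (if (n + 1 + zeroCount (Fin.cons b w : Fin (n + 2) → Fin 2)) % 3 = 1
        then 1 else 0) + (if (n + zeroCount w) % 3 = 1 then 1 else 0) = 1 := by
    simp only [Fin.sum_univ_two, zeroCount_cons]
    split_ifs <;> omega
  simp only [congruenceSeqs, card_filter]
  rw [← (Fin.consEquiv fun _ => Fin 2).sum_comp, Fintype.sum_prod_type, sum_comm,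
    ← sum_add_distrib]
  exact (sum_congr rfl fun w _ => per_tail w).trans (by simp)

@[simp]
lemma mem_congruenceSeqs {v : Fin (n + 1) → Fin 2} :
    v ∈ congruenceSeqs n ↔ (n + zeroCount v) % 3 = 1 := by
  simp [congruenceSeqs]

def IsAlternating (v : Fin (n + 1) → Fin 2) : Prop :=
  ∀ j : Fin n, v j.castSucc ≠ v j.succ

lemma isAlternating_cons (a : Fin 2) (w : Fin (n + 1) → Fin 2) :
    IsAlternating (Fin.cons a w : Fin (n + 2) → Fin 2) ↔ a ≠ w 0 ∧ IsAlternating w := by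
  simp [IsAlternating, Fin.forall_fin_succ]

instance : DecidablePred (@IsAlternating n) := fun _ => by
  unfold IsAlternating; infer_instance

def alternating : (n : ℕ) → Fin 2 → Fin (n + 1) → Fin 2
  | 0, b => fun _ => b
  | n + 1, b => Fin.cons b (alternating n b.rev)

@[simp]
lemma alternating_apply_zero (n : ℕ) (b : Fin 2) : alternating n b 0 = b := by
  cases n <;> rfl

lemma alternating_injective (n : ℕ) : Function.Injective (alternating n) :=
  fun b c h => by simpa using congrFun h 0

lemma isAlternating_iff_eq_alternating {v : Fin (n + 1) → Fin 2} :
    IsAlternating v ↔ v = alternating n (v 0) := by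
  induction n with
  | zero => exact ⟨fun _ => funext fun i => by rw [Fin.fin_one_eq_zero i]; rfl, fun _ j => j.elim0⟩
  | succ n ih =>
    have ne_iff_eq_rev : ∀ a c : Fin 2, a ≠ c ↔ c = a.rev := by decide
    rw [← Fin.cons_self_tail v, isAlternating_cons, ih, Fin.cons_zero, alternating,
      Fin.cons_inj, and_iff_right rfl, ne_iff_eq_rev]
    constructor
    · rintro ⟨h0, h⟩; rwa [← h0]
    · intro h
      have h0 : Fin.tail v 0 = (v 0).rev := by rw [h, alternating_apply_zero]
      exact ⟨h0, by rwa [h0]⟩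

lemma zeroCount_alternating (n : ℕ) (b : Fin 2) :
    zeroCount (alternating n b) = (n + 2 - b) / 2 := by
  induction n generalizing b with
  | zero => fin_cases b <;> rfl
  | succ n ih =>
    rw [alternating, zeroCount_cons, ih, Fin.val_rev]
    fin_cases b
    · simp only [Fin.zero_eta, ↓reduceIte]
      omega
    · simp only [Fin.mk_one, one_ne_zero, ↓reduceIte]
      omega

lemma card_filter_isAlternating_congruenceSeqs (n : ℕ) :
    #{v ∈ congruenceSeqs n | IsAlternating v} = (n + 1) % 2 := by
  have : {v ∈ congruenceSeqs n | IsAlternating v} =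
      image (alternating n) {b | alternating n b ∈ congruenceSeqs n} := by
    ext v
    simp only [mem_filter, mem_image, mem_univ, true_and, isAlternating_iff_eq_alternating]
    constructor
    · rintro ⟨hv, h⟩; exact ⟨v 0, h ▸ hv, h.symm⟩
    · rintro ⟨b, hb, rfl⟩; simpa using hb
  rw [this, card_image_of_injective _ (alternating_injective n), card_filter, Fin.sum_univ_two]
  simp only [mem_congruenceSeqs, zeroCount_alternating, Fin.val_zero, Fin.val_one]
  split_ifs <;> omega

lemma admissibleSeq_iff (hn : 1 ≤ n) (v : Fin (n + 1) → Fin 2) :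
    AdmissibleSeq v ↔ v ∈ congruenceSeqs n ∧ ¬ IsAlternating v := by
  simp only [AdmissibleSeq, mem_congruenceSeqs, IsAlternating, not_forall, not_not, zeroCount,
    hn, forall_const]
  exact and_comm

lemma card_admissibleSeq_add (hn : 1 ≤ n) :
    Nat.card {v : Fin (n + 1) → Fin 2 // AdmissibleSeq v} + (n + 1) % 2 = #(congruenceSeqs n) := by
  have : Nat.card {v : Fin (n + 1) → Fin 2 // AdmissibleSeq v} =
      #{v ∈ congruenceSeqs n | ¬ IsAlternating v} := by
    classical
    rw [Nat.card_eq_fintype_card, Fintype.card_subtype]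
    congr 1
    ext v
    simp [admissibleSeq_iff hn]
  rw [this, ← card_filter_isAlternating_congruenceSeqs, add_comm, card_filter_add_card_filter_not]

end BinarySeq

open BinarySeq

theorem stmt18 :
    Nat.card {v : Fin (1 + 1) → Fin 2 // AdmissibleSeq v} = 1 ∧
    ∀ n, 2 ≤ n →
      Nat.card {v : Fin (n + 1) → Fin 2 // AdmissibleSeq v} =
        2 ^ n - 1 - Nat.card {v : Fin (n - 1 + 1) → Fin 2 // AdmissibleSeq v} := by
  refine ⟨?_, fun n hn => ?_⟩
  · have h1 := card_admissibleSeq_add le_rfl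
    have h0 : #(congruenceSeqs 1) = 1 := by decide
    omega
  · obtain ⟨m, rfl⟩ : ∃ m, n = m + 1 := ⟨n - 1, by omega⟩
    have h2 := card_admissibleSeq_add (n := m + 1) (by omega)
    have h1 := card_admissibleSeq_add (n := m) (by omega)
    have h12 := card_congruenceSeqs_succ_add m
    rw [Nat.add_sub_cancel]
    omega
end

section
/- For n ≥ 0, the set of values obtained by all parenthesizations of x_0 ⊖ x_1 ⊖ ⋯ ⊖ x_n (as functions of the indeterminates) is exactly the set of linear forms Σ_{i=0}^n (-1)^{d_i} x_i over all admissible sequences (d_0,...,d_n) ∈ {0,1}^{n+1}. -/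
/-!
Reading the leaves of a parenthesization left to right, its value is `∑ (-1)^(dᵢ) xᵢ`, so
only the word of depth parities matters. A node flips the parity words of its two subtrees
and concatenates them; this keeps `length + #zeros ≡ 2 (mod 3)`, and every tree with at
least two leaves has a cherry, i.e. two adjacent leaves of equal parity. Conversely,
splitting a leaf of parity `a` into two leaves of parity `a + 1` realizes the expansion
`a ↦ (a+1)(a+1)` of parity words, and every admissible word of length at least two is
the expansion of a shorter admissible word, obtained by contracting a well-chosen adjacent
pair `a a` to `a + 1`. Induction on the length realizes every admissible word by a tree.
-/

lemma fin_two_eq_or_add_one_eq (a b : Fin 2) : a = b ∨ a + 1 = b := by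
  fin_cases a <;> fin_cases b <;> decide

lemma fin_two_add_one_add_one (a : Fin 2) : a + 1 + 1 = a := by
  fin_cases a <;> rfl

lemma List.count_ofFn {α : Type*} [DecidableEq α] {n : ℕ} (v : Fin n → α) (a : α) :
    (List.ofFn v).count a = (Finset.univ.filter fun i => v i = a).card := by
  rw [← Multiset.coe_count, ← Fin.univ_val_map, Multiset.count_map, Finset.card_def]
  simp [Finset.filter_val, eq_comm]

lemma List.not_isChain_ne_iff {α : Type*} {L : List α} :
    ¬ L.IsChain (· ≠ ·) ↔ ∃ u a w, L = u ++ a :: a :: w := by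
  simp only [List.isChain_iff_forall_rel_of_append_cons_cons, not_forall, not_not]
  constructor
  · rintro ⟨a, _, u, w, hL, rfl⟩
    exact ⟨u, a, w, hL⟩
  · rintro ⟨u, a, w, hL⟩
    exact ⟨a, a, u, w, hL, rfl⟩

lemma List.isChain_ne_map_iff {α β : Type*} {f : α → β} (hf : Function.Injective f)
    (L : List α) : (L.map f).IsChain (· ≠ ·) ↔ L.IsChain (· ≠ ·) := by
  simp [List.isChain_map, hf.ne_iff]

lemma count_zero_map_add_one_add_count_zero (L : List (Fin 2)) :
    (L.map (· + 1)).count 0 + L.count 0 = L.length := by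
  induction L with
  | nil => rfl
  | cons a L ih => fin_cases a <;> simp <;> omega

def signedSum (x : ℕ → ℤ) : List (Fin 2) → ℕ → ℤ
  | [], _ => 0
  | d :: L, k => (-1) ^ (d : ℕ) * x k + signedSum x L (k + 1)

lemma signedSum_append (x : ℕ → ℤ) (A B : List (Fin 2)) (k : ℕ) :
    signedSum x (A ++ B) k = signedSum x A k + signedSum x B (k + A.length) := by
  induction A generalizing k with
  | nil => simp [signedSum]
  | cons a A ih => simp [signedSum, ih, add_assoc, add_comm 1 A.length]

lemma signedSum_map_add_one (x : ℕ → ℤ) (A : List (Fin 2)) (k : ℕ) :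
    signedSum x (A.map (· + 1)) k = -signedSum x A k := by
  induction A generalizing k with
  | nil => simp [signedSum]
  | cons a A ih =>
    have hsign : (-1 : ℤ) ^ ((a + 1 : Fin 2) : ℕ) = -(-1) ^ (a : ℕ) := by fin_cases a <;> rfl
    simp only [List.map_cons, signedSum, ih, hsign]
    ring

lemma signedSum_ofFn (x : ℕ → ℤ) {m : ℕ} (v : Fin m → Fin 2) (k : ℕ) :
    signedSum x (List.ofFn v) k = ∑ i, (-1) ^ (v i : ℕ) * x (k + i) := by
  induction m generalizing k with
  | zero => simp [signedSum]
  | succ m ih =>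
    simp only [List.ofFn_succ, signedSum, ih, Fin.sum_univ_succ, Fin.val_succ, Fin.val_zero]
    simp only [add_zero, add_assoc, add_comm 1]

-- With `L` of length `n + 1`, the congruence `length + #zeros ≡ 2` is the paper's
-- `n + #zeros ≡ 1`; it also excludes the empty word.
def AdmissibleWord (L : List (Fin 2)) : Prop :=
  (2 ≤ L.length → ¬ L.IsChain (· ≠ ·)) ∧ (L.length + L.count 0) % 3 = 2

lemma admissibleSeq_iff_admissibleWord_ofFn {n : ℕ} (v : Fin (n + 1) → Fin 2) :
    AdmissibleSeq v ↔ AdmissibleWord (List.ofFn v) := by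
  simp only [AdmissibleSeq, AdmissibleWord, List.length_ofFn, List.count_ofFn,
    List.isChain_ofFn]
  refine and_congr ⟨fun h hn hchain => ?_, fun h hn => ?_⟩ (by omega)
  · obtain ⟨j, hj⟩ := h (by omega)
    exact hchain j (by omega) hj
  · obtain ⟨i, hi, hv⟩ : ∃ i, ∃ hi : i + 1 < n + 1, v ⟨i, by omega⟩ = v ⟨i + 1, hi⟩ := by
      simpa using h (by omega)
    exact ⟨⟨i, by omega⟩, hv⟩

lemma AdmissibleWord.eq_singleton_zero {L : List (Fin 2)} (hL : AdmissibleWord L)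
    (h : L.length < 2) : L = [0] := by
  match L, h, hL.2 with
  | [], _, hmod => simp at hmod
  | [c], _, hmod => fin_cases c <;> simp_all

lemma length_add_count_zero_contract_mod_three (u w : List (Fin 2)) (a : Fin 2) :
    ((u ++ (a + 1) :: w).length + (u ++ (a + 1) :: w).count 0) % 3 =
      ((u ++ a :: a :: w).length + (u ++ a :: a :: w).count 0) % 3 := by
  fin_cases a <;> simp <;> omega

-- Slide the pair `a a` to the left end of its run: if the run is preceded by `a + 1`, the
-- contraction creates the pair `(a+1) (a+1)`; a run at the start of the word is handled by
-- looking at the next letters, and only the words `a a a` have no good contraction.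
lemma exists_contract_of_ne_triple {L u w : List (Fin 2)} {a : Fin 2} (hL : ∀ c, L ≠ [c, c, c])
    (hLw : L = u ++ a :: a :: w) : ∃ u' b w', L = u' ++ b :: b :: w' ∧
      (2 ≤ (u' ++ (b + 1) :: w').length → ¬ (u' ++ (b + 1) :: w').IsChain (· ≠ ·)) := by
  induction u using List.reverseRecOn generalizing a w with
  | nil =>
    rcases w with _ | ⟨c, w⟩
    · exact ⟨[], a, [], hLw, by simp⟩
    obtain rfl | rfl := fin_two_eq_or_add_one_eq a c
    · rcases w with _ | ⟨d, w⟩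
      · exact absurd hLw (hL a)
      obtain rfl | rfl := fin_two_eq_or_add_one_eq a d
      · exact ⟨[], a, a :: a :: w, hLw, fun _ => List.not_isChain_ne_iff.2 ⟨[a + 1], a, w, rfl⟩⟩
      · exact ⟨[a], a, (a + 1) :: w, by simp [hLw],
          fun _ => List.not_isChain_ne_iff.2 ⟨[a], a + 1, w, rfl⟩⟩
    · exact ⟨[], a, (a + 1) :: w, hLw, fun _ => List.not_isChain_ne_iff.2 ⟨[], a + 1, w, rfl⟩⟩
  | append_singleton u c ih =>
    obtain rfl | rfl := fin_two_eq_or_add_one_eq a c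
    · exact ih (w := a :: w) (a := a) (by simp [hLw])
    · exact ⟨u ++ [a + 1], a, w, hLw,
        fun _ => List.not_isChain_ne_iff.2 ⟨u, a + 1, w, by simp⟩⟩

lemma AdmissibleWord.exists_contract {L : List (Fin 2)} (hL : AdmissibleWord L)
    (h2 : 2 ≤ L.length) :
    ∃ u a w, L = u ++ a :: a :: w ∧ AdmissibleWord (u ++ (a + 1) :: w) := by
  obtain ⟨hchain, hmod⟩ := hL
  obtain ⟨u, a, w, hL⟩ := List.not_isChain_ne_iff.1 (hchain h2)
  have hL3 : ∀ c, L ≠ [c, c, c] := by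
    rintro c rfl
    fin_cases c <;> simp at hmod
  obtain ⟨u', b, w', he, hb⟩ := exists_contract_of_ne_triple hL3 hL
  exact ⟨u', b, w', he, hb, (length_add_count_zero_contract_mod_three u' w' b).trans (he ▸ hmod)⟩

namespace BTree

def parity (t : BTree) : List (Fin 2) := t.depths.map (Fin.ofNat 2)

@[simp] lemma parity_leaf : leaf.parity = [0] := rfl

@[simp] lemma parity_node (l r : BTree) :
    (node l r).parity = (l.parity ++ r.parity).map (· + 1) := by
  have hsucc (d : ℕ) : Fin.ofNat 2 (d + 1) = Fin.ofNat 2 d + 1 :=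
    Fin.ext (by simp [Fin.val_add])
  simp only [parity, depths, List.map_append, List.map_map, Function.comp_def, hsucc]

@[simp] lemma length_parity (t : BTree) : t.parity.length = t.numLeaves := by
  simp [parity, numLeaves]

lemma eval_eq_signedSum (x : ℕ → ℤ) (t : BTree) (k : ℕ) :
    t.eval x k = signedSum x t.parity k := by
  induction t generalizing k with
  | leaf => simp [eval, signedSum]
  | node l r ihl ihr =>
    rw [eval, ihl, ihr, parity_node, signedSum_map_add_one, signedSum_append, length_parity]
    ring

lemma length_add_count_zero_parity_mod_three (t : BTree) :
    (t.parity.length + t.parity.count 0) % 3 = 2 := by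
  induction t with
  | leaf => rfl
  | node l r ihl ihr =>
    have hl := count_zero_map_add_one_add_count_zero l.parity
    have hr := count_zero_map_add_one_add_count_zero r.parity
    simp only [parity_node, List.map_append, List.count_append, List.length_append,
      List.length_map] at *
    omega

lemma not_isChain_parity_node : ∀ l r : BTree, ¬ (node l r).parity.IsChain (· ≠ ·)
  | leaf, leaf => by decide
  | node a b, r => fun h => not_isChain_parity_node a b
      ((List.isChain_ne_map_iff (add_left_injective 1) _).1 (parity_node _ _ ▸ h)).left_of_append
  | leaf, node a b => fun h => not_isChain_parity_node a b
      ((List.isChain_ne_map_iff (add_left_injective 1) _).1 (parity_node _ _ ▸ h)).right_of_append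
termination_by l r => sizeOf l + sizeOf r

lemma admissibleWord_parity (t : BTree) : AdmissibleWord t.parity := by
  refine ⟨fun h2 => ?_, t.length_add_count_zero_parity_mod_three⟩
  cases t with
  | leaf => simp at h2
  | node l r => exact not_isChain_parity_node l r

lemma exists_parity_expand (t : BTree) (u w : List (Fin 2)) (b : Fin 2)
    (h : t.parity = u ++ b :: w) : ∃ t' : BTree, t'.parity = u ++ (b + 1) :: (b + 1) :: w := by
  induction t generalizing u w b with
  | leaf =>
    rcases u with _ | ⟨_, _ | _⟩ <;> simp at h
    obtain ⟨rfl, rfl⟩ := h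
    exact ⟨node leaf leaf, rfl⟩
  | node l r ihl ihr =>
    rw [parity_node, List.map_eq_append_iff] at h
    obtain ⟨u, cw, hlr, rfl, hcw⟩ := h
    obtain ⟨c, w, rfl, rfl, rfl⟩ := List.map_eq_cons_iff.1 hcw
    suffices ∃ l' r' : BTree, l'.parity ++ r'.parity = u ++ (c + 1) :: (c + 1) :: w by
      obtain ⟨l', r', h⟩ := this
      exact ⟨node l' r', by simp [h, fin_two_add_one_add_one]⟩
    rcases List.append_eq_append_iff.1 hlr with ⟨v, rfl, hr⟩ | ⟨_ | ⟨c', v⟩, hl, hr⟩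
    · obtain ⟨r', hr'⟩ := ihr v w c hr
      exact ⟨l, r', by simp [hr']⟩
    · obtain ⟨r', hr'⟩ := ihr [] w c (by simpa using hr.symm)
      exact ⟨l, r', by simp_all⟩
    · obtain ⟨rfl, rfl⟩ := List.cons_eq_cons.1 hr
      obtain ⟨l', hl'⟩ := ihl u v _ hl
      exact ⟨l', r, by simp [hl']⟩

end BTree

lemma exists_parity_eq_of_admissibleWord {L : List (Fin 2)} (hL : AdmissibleWord L) :
    ∃ t : BTree, t.parity = L := by
  induction hn : L.length using Nat.strong_induction_on generalizing L with
  | _ n ih =>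
  rcases Nat.lt_or_ge n 2 with hn2 | hn2
  · exact ⟨.leaf, (hL.eq_singleton_zero (hn ▸ hn2)).symm⟩
  · obtain ⟨u, a, w, rfl, hcontr⟩ := hL.exists_contract (hn ▸ hn2)
    obtain ⟨t', ht'⟩ := ih _ (by simp at hn ⊢; omega) hcontr rfl
    obtain ⟨t, ht⟩ := t'.exists_parity_expand u w (a + 1) ht'
    exact ⟨t, by simpa [fin_two_add_one_add_one] using ht⟩

theorem stmt19 (n : ℕ) :
    {f : (ℕ → ℤ) → ℤ | ∃ t : BTree, t.numLeaves = n + 1 ∧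
        f = fun x => t.eval x 0} =
      {f : (ℕ → ℤ) → ℤ | ∃ v : Fin (n + 1) → Fin 2, AdmissibleSeq v ∧
        f = fun x => ∑ i : Fin (n + 1), (-1) ^ (v i : ℕ) * x i} := by
  ext f
  constructor
  · rintro ⟨t, ht, rfl⟩
    obtain ⟨v, hv⟩ : ∃ v : Fin (n + 1) → Fin 2, List.ofFn v = t.parity :=
      ⟨fun i => t.parity[i.val]'(by simpa [ht] using i.isLt),
        List.ext_getElem (by simp [ht]) fun _ _ _ => List.getElem_ofFn ..⟩
    refine ⟨v, (admissibleSeq_iff_admissibleWord_ofFn v).2 (hv ▸ t.admissibleWord_parity),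
      funext fun x => ?_⟩
    rw [BTree.eval_eq_signedSum, ← hv, signedSum_ofFn]
    simp
  · rintro ⟨v, hv, rfl⟩
    obtain ⟨t, ht⟩ :=
      exists_parity_eq_of_admissibleWord ((admissibleSeq_iff_admissibleWord_ofFn v).1 hv)
    refine ⟨t, by simpa using congrArg List.length ht, funext fun x => ?_⟩
    rw [BTree.eval_eq_signedSum, ht, signedSum_ofFn]
    simp
end
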